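/- arXiv:math/0612125 — 5 statements merged into one kernel-verified Lean document; each statement's English description precedes it below -/
import Mathlib

section
/- Let A be a unital C*-algebra, p ∈ A a projection, U ∈ A a unitary, and 0 < δ < 1 with ‖pU − Up‖ < δ. Then pUp is an invertible element of the corner C*-algebra pAp (with unit p); moreover, writing z = (pUp)·|pUp|^{−1} for its unitary part in pAp (where |pUp| = ((pUp)*(pUp))^{1/2} and the inverse is taken in pAp), one has ‖z − pUp‖ < δ/√(1−δ). -/
/-- If `p` is a projection, `U` a unitary, and `‖pU − Up‖ < δ < 1`, then
`pUp` is invertible in the corner `pAp` (with unit `p`), and its unitary part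
`z = (pUp)·|pUp|⁻¹` in `pAp` satisfies `‖z − pUp‖ < δ/√(1−δ)`. -/
theorem corner_compression_of_unitary_almost_unitary
    {A : Type*} [CStarAlgebra A] [PartialOrder A] [StarOrderedRing A] (p U : A)
    (hp : IsSelfAdjoint p ∧ p * p = p) (hU : U ∈ unitary A)
    (δ : ℝ) (hδ0 : 0 < δ) (hδ1 : δ < 1) (h : ‖p * U - U * p‖ < δ) :
    -- `pUp` is invertible in the corner algebra `pAp` with unit `p` :
    (∃ y : A, y = p * y * p ∧ (p * U * p) * y = p ∧ y * (p * U * p) = p) ∧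
    -- and the unitary part `z = (pUp)·|pUp|⁻¹` of `pUp` in `pAp`, where
    -- `b = |pUp| = ((pUp)*(pUp))^(1/2)` and the inverse is taken in `pAp`, is a unitary of
    -- `pAp` lying within `δ/√(1−δ)` of `pUp` :
    ∃ z b : A, b = p * b * p ∧ 0 ≤ b ∧ b * b = star (p * U * p) * (p * U * p) ∧
      (∃ y : A, y = p * y * p ∧ b * y = p ∧ y * b = p ∧ z = (p * U * p) * y) ∧
      star z * z = p ∧ z * star z = p ∧
      ‖z - p * U * p‖ < δ / Real.sqrt (1 - δ) := by
  have hsqrtδ : 0 < Real.sqrt (1 - δ) := Real.sqrt_pos.mpr (by linarith)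
  have hδfinal : δ ^ 2 < δ / Real.sqrt (1 - δ) := by
    rw [lt_div_iff₀ hsqrtδ]
    have h1 : Real.sqrt (1 - δ) ≤ 1 := Real.sqrt_le_one.mpr (by linarith)
    nlinarith
  by_cases htriv : Subsingleton A
  · have hall : ∀ x y : A, x = y := fun x y => Subsingleton.elim x y
    refine ⟨⟨0, hall _ _, hall _ _, hall _ _⟩, 0, 0, hall _ _, le_of_eq (hall _ _),
      hall _ _, ⟨0, hall _ _, hall _ _, hall _ _, hall _ _⟩, hall _ _, hall _ _, ?_⟩
    rw [hall (0 - p * U * p) 0, norm_zero]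
    calc (0:ℝ) < δ ^ 2 := by positivity
      _ < _ := hδfinal
  haveI : Nontrivial A := not_subsingleton_iff_nontrivial.mp htriv
  obtain ⟨hpsa, hpp⟩ := hp
  have hps : star p = p := hpsa
  have hUU : star U * U = 1 := (Unitary.mem_iff.mp hU).1
  have hUU' : U * star U = 1 := (Unitary.mem_iff.mp hU).2
  have hpp' : ∀ x : A, p * (p * x) = p * x := fun x => by rw [← mul_assoc, hpp]
  have hU1 : ∀ x : A, star U * (U * x) = x := fun x => by rw [← mul_assoc, hUU, one_mul]
  have hU2 : ∀ x : A, U * (star U * x) = x := fun x => by rw [← mul_assoc, hUU', one_mul]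
  set a := p * U * p with ha_def
  have hpa : p * a = a := by rw [ha_def, ← mul_assoc, ← mul_assoc, hpp]
  have hap : a * p = a := by rw [ha_def, mul_assoc, hpp]
  have hpsa' : p * star a = star a := by
    have := congrArg star hap; rwa [star_mul, hps] at this
  have hsap : star a * p = star a := by
    have := congrArg star hpa; rwa [star_mul, hps] at this
  have hpm : p * (star a * a) = star a * a := by rw [← mul_assoc, hpsa']
  have hmp : (star a * a) * p = star a * a := by rw [mul_assoc, hap]
  have hpn : p * (a * star a) = a * star a := by rw [← mul_assoc, hpa]
  have hnp : (a * star a) * p = a * star a := by rw [mul_assoc, hsap]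
  -- the defect elements
  have hvv : star ((1 - p) * (U * p)) * ((1 - p) * (U * p)) = p - star a * a := by
    simp only [ha_def, star_mul, star_sub, star_one, hps, mul_sub, sub_mul, mul_one, one_mul,
      mul_assoc, hpp', hU1, hpp, hUU]
    abel
  have hww : ((p * U) * (1 - p)) * star ((p * U) * (1 - p)) = p - a * star a := by
    simp only [ha_def, star_mul, star_sub, star_one, hps, mul_sub, sub_mul, mul_one, one_mul,
      mul_assoc, hpp', hU2, hpp, hUU']
    abel
  have hr0 : 0 ≤ p - star a * a := hvv ▸ star_mul_self_nonneg _
  -- projection norm bounds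
  have hnp1 : ‖p‖ ≤ 1 := by
    have h1 : ‖p‖ * ‖p‖ = ‖p‖ := by
      rw [← CStarRing.norm_star_mul_self (x := p), hps, hpp]
    nlinarith [norm_nonneg p]
  have h1p_proj : (1 - p) * (1 - p) = 1 - p := by
    simp only [mul_sub, sub_mul, one_mul, mul_one, hpp]; abel
  have hn1p : ‖(1:A) - p‖ ≤ 1 := by
    have h1 : ‖(1:A) - p‖ * ‖(1:A) - p‖ = ‖(1:A) - p‖ := by
      rw [← CStarRing.norm_star_mul_self (x := 1 - p)]
      simp only [star_sub, star_one, hps, h1p_proj]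
    nlinarith [norm_nonneg ((1:A) - p)]
  -- norms of defects
  have hδ2 : δ ^ 2 < 1 := by nlinarith
  have hnv : ‖(1 - p) * (U * p)‖ < δ := by
    have hv2 : (1 - p) * (U * p) = (1 - p) * (U * p - p * U) := by
      simp only [mul_sub, sub_mul, one_mul, mul_one, hpp', ← mul_assoc, hpp]
      abel
    rw [hv2]
    calc ‖(1 - p) * (U * p - p * U)‖ ≤ ‖(1:A) - p‖ * ‖U * p - p * U‖ := norm_mul_le _ _
      _ ≤ ‖U * p - p * U‖ := mul_le_of_le_one_left (norm_nonneg _) hn1p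
      _ = ‖p * U - U * p‖ := norm_sub_rev _ _
      _ < δ := h
  have hnw : ‖(p * U) * (1 - p)‖ < δ := by
    have hw2 : (p * U) * (1 - p) = (p * U - U * p) * (1 - p) := by
      simp only [mul_sub, sub_mul, one_mul, mul_one, mul_assoc, hpp]
      abel
    rw [hw2]
    calc ‖(p * U - U * p) * (1 - p)‖ ≤ ‖p * U - U * p‖ * ‖(1:A) - p‖ := norm_mul_le _ _
      _ ≤ ‖p * U - U * p‖ := mul_le_of_le_one_right (norm_nonneg _) hn1p
      _ < δ := h
  have hnr : ‖p - star a * a‖ < δ ^ 2 := by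
    rw [← hvv, CStarRing.norm_star_mul_self]
    have := norm_nonneg ((1 - p) * (U * p)); nlinarith
  have hnr2 : ‖p - a * star a‖ < δ ^ 2 := by
    rw [← hww, CStarRing.norm_self_mul_star]
    have := norm_nonneg ((p * U) * (1 - p)); nlinarith
  -- the element c = 1 - (p - a*a*) and its spectrum
  set c := (1:A) - (p - star a * a) with hc_def
  have hcsa : IsSelfAdjoint c := by
    rw [IsSelfAdjoint, hc_def]
    simp [star_sub, star_one, star_mul, hps, star_star]
  have hspec : ∀ x ∈ spectrum ℝ c, ∃ μ : ℝ, 0 ≤ μ ∧ μ ≤ ‖p - star a * a‖ ∧ x = 1 - μ := by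
    intro x hx
    rw [hc_def, show (1:A) - (p - star a * a) = algebraMap ℝ A 1 - (p - star a * a) by simp,
      ← spectrum.singleton_sub_eq] at hx
    obtain ⟨u, hu, μ, hμ, hxe⟩ := Set.mem_sub.mp hx
    refine ⟨μ, spectrum_nonneg_of_nonneg hr0 hμ, ?_, ?_⟩
    · have := spectrum.norm_le_norm_of_mem hμ
      rwa [Real.norm_eq_abs, abs_of_nonneg (spectrum_nonneg_of_nonneg hr0 hμ)] at this
    · simp only [Set.mem_singleton_iff] at hu; linarith
  have h1δ2 : 0 < 1 - δ ^ 2 := by linarith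
  have hspos : ∀ x ∈ spectrum ℝ c, 0 < x := by
    intro x hx
    obtain ⟨μ, hμ0, hμle, hxe⟩ := hspec x hx
    linarith
  have conts : ContinuousOn Real.sqrt (spectrum ℝ c) := Real.continuous_sqrt.continuousOn
  have contt : ContinuousOn (fun x : ℝ => (Real.sqrt x)⁻¹) (spectrum ℝ c) :=
    ContinuousOn.inv₀ Real.continuous_sqrt.continuousOn
      (fun x hx => (Real.sqrt_pos.mpr (hspos x hx)).ne')
  set s := cfc Real.sqrt c with hs_def
  set t := cfc (fun x : ℝ => (Real.sqrt x)⁻¹) c with ht_def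
  have hss : s * s = c := by
    rw [hs_def, ← cfc_mul _ _ c conts conts]
    exact (cfc_congr (fun x hx => Real.mul_self_sqrt (hspos x hx).le)).trans (cfc_id ℝ c hcsa)
  have hst : s * t = 1 := by
    rw [hs_def, ht_def, ← cfc_mul _ _ c conts contt]
    exact (cfc_congr (fun x hx =>
      mul_inv_cancel₀ (Real.sqrt_pos.mpr (hspos x hx)).ne')).trans (cfc_const_one ℝ c)
  have hts : t * s = 1 := by
    rw [hs_def, ht_def, ← cfc_mul _ _ c contt conts]
    exact (cfc_congr (fun x hx =>
      inv_mul_cancel₀ (Real.sqrt_pos.mpr (hspos x hx)).ne')).trans (cfc_const_one ℝ c)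
  have hs0 : 0 ≤ s := cfc_nonneg (fun x _ => Real.sqrt_nonneg x)
  have hssa : IsSelfAdjoint s := cfc_predicate _ _
  have htsa : IsSelfAdjoint t := cfc_predicate _ _
  -- `c` commutes with `p`
  have hpc : p * c = star a * a := by
    rw [hc_def]; simp only [mul_sub, mul_one, hpp, hpm]; abel
  have hcp : c * p = star a * a := by
    rw [hc_def]; simp only [sub_mul, one_mul, hpp, hmp]; abel
  have hpc' : p * c = c * p := hpc.trans hcp.symm
  -- `s` commutes with `p`, via uniqueness of positive square roots
  set q := (1:A) - (p + p) with hq_def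
  have hq2 : q * q = 1 := by
    rw [hq_def]
    simp only [sub_mul, mul_sub, add_mul, mul_add, one_mul, mul_one, hpp]
    abel
  have hq2' : ∀ x : A, q * (q * x) = x := fun x => by rw [← mul_assoc, hq2, one_mul]
  have hqsa : star q = q := by rw [hq_def]; simp [star_sub, star_add, hps]
  have hqc : q * c = c * q := by
    rw [hq_def]
    simp only [sub_mul, mul_sub, add_mul, mul_add, one_mul, mul_one, hpc']
  have hqq : (q * s * q) * (q * s * q) = c := by
    simp only [mul_assoc, hq2']
    rw [show s * (s * q) = c * q by rw [← mul_assoc, hss], ← mul_assoc, hqc, mul_assoc,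
      hq2, mul_one]
  have hqsq0 : 0 ≤ q * s * q := by
    have := star_left_conjugate_nonneg hs0 q
    rwa [hqsa] at this
  have hqs : q * s * q = s :=
    (CFC.sqrt_unique hqq hqsq0).symm.trans (CFC.sqrt_unique hss hs0)
  have hqscomm : q * s = s * q := by
    have := congrArg (· * q) hqs
    simpa only [mul_assoc, hq2, mul_one] using this
  have hcomm_ps : p * s = s * p := by
    have h1 : s - (p * s + p * s) = s - (s * p + s * p) := by
      have := hqscomm
      rw [hq_def] at this
      simp only [sub_mul, mul_sub, add_mul, mul_add, one_mul, mul_one] at this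
      linear_combination (norm := abel) this
    have h2 : p * s + p * s = s * p + s * p := sub_right_injective h1
    have h3 : (2:ℂ) • (p * s) = (2:ℂ) • (s * p) := by
      rw [two_smul, two_smul]; exact_mod_cast h2
    exact smul_right_injective A two_ne_zero h3
  have hcomm_pt : p * t = t * p := by
    let S : Aˣ := ⟨s, t, hst, hts⟩
    have h1 : Commute p (S : A) := hcomm_ps
    exact h1.units_inv_right
  have h1pt : t * (1 - p) = (1 - p) * t := by
    simp only [mul_sub, sub_mul, mul_one, one_mul, hcomm_pt]
  -- the element d = 1 - (p - a a*) and its inverse e2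
  have hd_unit : ‖p - a * star a‖ < 1 := lt_trans hnr2 hδ2
  set u2 : Aˣ := Units.oneSub (p - a * star a) hd_unit with hu2_def
  set d := (1:A) - (p - a * star a) with hd_def
  have hu2val : (u2 : A) = d := rfl
  set e2 := ((u2⁻¹ : Aˣ) : A) with he2_def
  have he2d : e2 * d = 1 := by rw [← hu2val, he2_def]; exact u2.inv_mul
  have hde2 : d * e2 = 1 := by rw [← hu2val, he2_def]; exact u2.mul_inv
  -- key intertwining relation
  have hkey : a * c = d * a := by
    rw [hc_def, hd_def]
    simp only [mul_sub, sub_mul, mul_one, one_mul, hap, hpa, mul_assoc]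
  set e := t * t with he_def
  have hct : c * t = s := by rw [← hss, mul_assoc, hst, mul_one]
  have htc : t * c = s := by rw [← hss, ← mul_assoc, hts, one_mul]
  have hce : c * e = 1 := by rw [he_def, ← mul_assoc, hct, hst]
  have hec : e * c = 1 := by rw [he_def, mul_assoc, htc, hts]
  have hda : d * (a * e) = a := by rw [← mul_assoc, ← hkey, mul_assoc, hce, mul_one]
  have hae : a * e = e2 * a := by
    conv_rhs => rw [← hda]
    rw [← mul_assoc e2 d (a * e), he2d, one_mul]
  -- facts about 1 - p
  have hp1p : p * (1 - p) = 0 := by simp only [mul_sub, mul_one, hpp, sub_self]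
  have hd1p : d * (1 - p) = 1 - p := by
    rw [hd_def]
    simp only [sub_mul, mul_sub, mul_one, one_mul, hpp, hnp]
    abel
  have he2p : e2 * (1 - p) = 1 - p := by
    conv_lhs => rw [← hd1p]
    rw [← mul_assoc e2 d (1 - p), he2d, one_mul]
  have h1pc : (1 - p) * c = 1 - p := by
    rw [hc_def]
    simp only [sub_mul, mul_sub, mul_one, one_mul, hpp, hpm]
    abel
  have h1pe : (1 - p) * e = 1 - p := by
    conv_lhs => rw [← h1pc]
    rw [mul_assoc (1 - p) c e, hce, mul_one]
  -- the unitary part z and the absolute value b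
  set y := t * p with hy_def
  set z := a * y with hz_def
  set b := s * p with hb_def
  have hza : z = a * t := by
    rw [hz_def, hy_def, show t * p = p * t from hcomm_pt.symm, ← mul_assoc, hap]
  have hsz : star z = t * star a := by rw [hza, star_mul, htsa.star_eq]
  have hpz : p * z = z := by rw [hza, ← mul_assoc, hpa]
  have hzp : z * p = z := by
    rw [hza, mul_assoc, show t * p = p * t from hcomm_pt.symm, ← mul_assoc, hap]
  have hmc : star a * a = c - (1 - p) := by rw [hc_def]; abel
  have hnd : a * star a = d - (1 - p) := by rw [hd_def]; abel
  have hzz : star z * z = p := by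
    have h1 : star z * z = t * ((c - (1 - p)) * t) := by
      rw [hsz, hza, ← hmc]
      simp only [mul_assoc]
    rw [h1, sub_mul, mul_sub, ← mul_assoc t c t, htc, hst, ← mul_assoc t (1 - p) t, h1pt,
      mul_assoc, ← he_def, h1pe]
    abel
  have hzz' : z * star z = p := by
    have h1 : z * star z = a * e * star a := by
      rw [hsz, hza, he_def]
      simp only [mul_assoc]
    rw [h1, hae, mul_assoc, hnd, mul_sub, he2d, he2p]
    abel
  have hpy : p * y = y := by rw [hy_def, ← mul_assoc, hcomm_pt, mul_assoc, hpp]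
  have hyp : y * p = y := by rw [hy_def, mul_assoc, hpp]
  have hzsp : star z * p = star z := by rw [hsz, mul_assoc, hsap]
  have hsza : star z * a = s - (1 - p) * t := by
    rw [hsz, mul_assoc, hmc, mul_sub, htc, h1pt]
  have hpb' : p * b = b := by rw [hb_def, ← mul_assoc, hcomm_ps, mul_assoc, hpp]
  have hbp' : b * p = b := by rw [hb_def, mul_assoc, hpp]
  refine ⟨⟨y * star z, ?_, ?_, ?_⟩, z, b, ?_, ?_, ?_, ⟨y, ?_, ?_, ?_, hz_def⟩, hzz, hzz', ?_⟩
  · rw [← mul_assoc p y (star z), hpy, mul_assoc y (star z) p, hzsp]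
  · rw [← mul_assoc, ← hz_def, hzz']
  · rw [mul_assoc, hsza, hy_def, mul_sub, mul_assoc t p s, show p * s = s * p from hcomm_ps,
      ← mul_assoc t s p, hts, one_mul, mul_assoc t p ((1 - p) * t),
      ← mul_assoc p (1 - p) t, hp1p, zero_mul, mul_zero, sub_zero]
  · rw [hpb', hbp']
  · have h5 : 0 ≤ star p * s * p := star_left_conjugate_nonneg hs0 p
    rwa [hps, hcomm_ps, mul_assoc, hpp, ← hb_def] at h5
  · rw [hb_def, mul_assoc, ← mul_assoc p s p, hcomm_ps, mul_assoc, hpp, ← mul_assoc, hss, hcp]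
  · rw [hpy, hyp]
  · rw [hb_def, hy_def, mul_assoc, ← mul_assoc p t p, hcomm_pt, mul_assoc, hpp, ← mul_assoc,
      hst, one_mul]
  · rw [hy_def, hb_def, mul_assoc, ← mul_assoc p s p, hcomm_ps, mul_assoc, hpp, ← mul_assoc,
      hts, one_mul]
  · -- the norm estimate
    clear_value a c s t q u2 d e2 e y z b
    have hzb : z * b = a := by
      rw [hza, hb_def, mul_assoc, ← mul_assoc t s p, hts, one_mul, hap]
    have hzdiff : z - a = z * (p - b) := by rw [mul_sub, hzp, hzb]
    have hnz : ‖z‖ ≤ 1 := by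
      have h1 : ‖z‖ * ‖z‖ = ‖p‖ := by rw [← CStarRing.norm_star_mul_self (x := z), hzz]
      have h2 : ‖z‖ * ‖z‖ ≤ 1 := le_trans (le_of_eq h1) hnp1
      have h3 := abs_le_one_iff_mul_self_le_one.mpr h2
      rwa [abs_of_nonneg (norm_nonneg z)] at h3
    have h1s : (1:A) - s = cfc (fun x : ℝ => 1 - Real.sqrt x) c := by
      rw [cfc_sub _ _ c continuousOn_const conts, cfc_const_one ℝ c, ← hs_def]
    have hpbs : p - b = ((1:A) - s) * p := by rw [sub_mul, one_mul, hb_def]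
    have hnorm1s : ‖(1:A) - s‖ ≤ ‖p - star a * a‖ := by
      rw [h1s]
      apply norm_cfc_le (norm_nonneg _)
      intro x hx
      obtain ⟨μ, hμ0, hμle, hxe⟩ := hspec x hx
      subst hxe
      have hx0 : (0:ℝ) ≤ 1 - μ := by linarith
      have hsq : 1 - μ ≤ Real.sqrt (1 - μ) := by
        have h2 : (1 - μ) * (1 - μ) ≤ 1 - μ :=
          mul_le_of_le_one_left hx0 (by linarith)
        have h3 := Real.sqrt_le_sqrt h2
        rwa [Real.sqrt_mul_self hx0] at h3
      have hsqle1 : Real.sqrt (1 - μ) ≤ 1 := Real.sqrt_le_one.mpr (by linarith)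
      rw [Real.norm_eq_abs, abs_of_nonneg (by linarith)]
      linarith
    calc ‖z - a‖ = ‖z * (p - b)‖ := by rw [hzdiff]
      _ ≤ ‖z‖ * ‖p - b‖ := norm_mul_le _ _
      _ ≤ ‖p - b‖ := mul_le_of_le_one_left (norm_nonneg _) hnz
      _ = ‖((1:A) - s) * p‖ := by rw [hpbs]
      _ ≤ ‖(1:A) - s‖ * ‖p‖ := norm_mul_le _ _
      _ ≤ ‖(1:A) - s‖ := mul_le_of_le_one_right (norm_nonneg _) hnp1
      _ ≤ ‖p - star a * a‖ := hnorm1s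
      _ < δ ^ 2 := hnr
      _ < δ / Real.sqrt (1 - δ) := hδfinal
end

section
/- Define continuous real-valued functions f, g, h on the unit circle by: f(e^{2πit}) = 1−2t for 0 ≤ t ≤ 1/2 and f(e^{2πit}) = −1+2t for 1/2 < t ≤ 1; g(e^{2πit}) = (f − f²)^{1/2}(e^{2πit}) for 0 ≤ t ≤ 1/2 and g = 0 for 1/2 < t ≤ 1; h = 0 for 0 ≤ t ≤ 1/2 and h = (f − f²)^{1/2} for 1/2 < t ≤ 1. Let A be a unital C*-algebra and let u, v ∈ A be commuting unitaries (uv = vu). Then the element e(u,v) = [[f(v), g(v) + h(v)u*], [g(v) + u h(v), 1 − f(v)]] of M₂(A) is a projection (self-adjoint idempotent). -/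
/-! On the circle, `f`, `g`, `h` are real with `g h = 0` and `g² + h² = f - f²`; the continuous
functional calculus of `v` transports these identities to `F = f(v)`, `G = g(v)`, `H = h(v)`,
and `u` commutes with all three by Fuglede's theorem. With `X = G + u H` the matrix is
`[[F, X*], [X, 1 - F]]`, which is a projection because `F` commutes with `X` and
`X* X = X X* = G² + H² = F - F²`: the cross terms vanish since `u` commutes with `G` and `H`,
and `u* u = u u* = 1`. -/

open Complex

lemma Matrix.isStarProjection_fin_two {R : Type*} [Ring R] [StarRing R] {F X : R}
    (hF : IsSelfAdjoint F) (hXF : Commute X F) (hX₁ : star X * X = F - F * F)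
    (hX₂ : X * star X = F - F * F) :
    IsStarProjection !![F, star X; X, 1 - F] := by
  have hX'F : Commute (star X) F := hF.star_eq ▸ hXF.star_star
  refine ⟨?_, ?_⟩
  · rw [IsIdempotentElem, Matrix.mul_fin_two, hX₁, hX₂, ← hX'F.eq, hXF.eq]
    congr 1; noncomm_ring
  · ext i j
    fin_cases i <;> fin_cases j <;> simp [Matrix.star_apply, hF.star_eq]

structure IsBottTriple {R : Type*} [Ring R] [Star R] (F G H : R) : Prop where
  isSelfAdjoint_fst : IsSelfAdjoint F
  isSelfAdjoint_snd : IsSelfAdjoint G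
  isSelfAdjoint_thd : IsSelfAdjoint H
  mul_eq_zero : G * H = 0
  mul_self_add_mul_self : G * G + H * H = F - F * F

namespace IsBottTriple

variable {R : Type*} [Ring R] [StarRing R] {u F G H : R}

lemma mul_eq_zero' (t : IsBottTriple F G H) : H * G = 0 := by
  simpa [t.isSelfAdjoint_snd.star_eq, t.isSelfAdjoint_thd.star_eq] using
    congrArg star t.mul_eq_zero

lemma swap (t : IsBottTriple F G H) : IsBottTriple F H G where
  isSelfAdjoint_fst := t.isSelfAdjoint_fst
  isSelfAdjoint_snd := t.isSelfAdjoint_thd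
  isSelfAdjoint_thd := t.isSelfAdjoint_snd
  mul_eq_zero := t.mul_eq_zero'
  mul_self_add_mul_self := by rw [add_comm, t.mul_self_add_mul_self]

lemma star_add_mul_self (t : IsBottTriple F G H) (hu : u ∈ unitary R) (huG : Commute u G) :
    star (G + u * H) * (G + u * H) = F - F * F := by
  have hu'G : Commute (star u) G := t.isSelfAdjoint_snd.star_eq ▸ huG.star_star
  have hGuH : G * (u * H) = 0 := by
    rw [← mul_assoc, ← huG.eq, mul_assoc, t.mul_eq_zero, mul_zero]
  have hHu'G : H * star u * G = 0 := by
    rw [mul_assoc, hu'G.eq, ← mul_assoc, t.mul_eq_zero', zero_mul]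
  have hHu'uH : H * star u * (u * H) = H * H := by
    rw [mul_assoc, ← mul_assoc (star u), Unitary.star_mul_self_of_mem hu, one_mul]
  calc star (G + u * H) * (G + u * H)
      = G * G + G * (u * H) + H * star u * G + H * star u * (u * H) := by
        rw [star_add, star_mul, t.isSelfAdjoint_snd.star_eq, t.isSelfAdjoint_thd.star_eq]
        noncomm_ring
    _ = F - F * F := by rw [hGuH, hHu'G, hHu'uH, add_zero, add_zero, t.mul_self_add_mul_self]

lemma add_mul_mul_star_self (t : IsBottTriple F G H) (hu : u ∈ unitary R) (huH : Commute u H) :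
    (G + u * H) * star (G + u * H) = F - F * F := by
  have hGHu' : G * (H * star u) = 0 := by rw [← mul_assoc, t.mul_eq_zero, zero_mul]
  have huHG : u * H * G = 0 := by rw [mul_assoc, t.mul_eq_zero', mul_zero]
  have huHHu' : u * H * (H * star u) = H * H := by
    rw [← mul_assoc, mul_assoc u, (huH.mul_right huH).eq, mul_assoc,
      Unitary.mul_star_self_of_mem hu, mul_one]
  calc (G + u * H) * star (G + u * H)
      = G * G + G * (H * star u) + u * H * G + u * H * (H * star u) := by
        rw [star_add, star_mul, t.isSelfAdjoint_snd.star_eq, t.isSelfAdjoint_thd.star_eq]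
        noncomm_ring
    _ = F - F * F := by rw [hGHu', huHG, huHHu', add_zero, add_zero, t.mul_self_add_mul_self]

end IsBottTriple

lemma isBottTriple_ofReal_sqrt {a : ℝ} (h₀ : 0 ≤ a) (h₁ : a ≤ 1) :
    IsBottTriple (a : ℂ) (√(a - a ^ 2) : ℂ) 0 where
  isSelfAdjoint_fst := Complex.conj_ofReal a
  isSelfAdjoint_snd := Complex.conj_ofReal _
  isSelfAdjoint_thd := star_zero ℂ
  mul_eq_zero := mul_zero _
  mul_self_add_mul_self := by
    have : 0 ≤ a - a ^ 2 := by nlinarith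
    rw [← ofReal_mul, Real.mul_self_sqrt this]
    push_cast
    ring

def bottMatrix {R : Type*} [Ring R] [Star R] (u F G H : R) : Matrix (Fin 2) (Fin 2) R :=
  !![F, G + H * star u; G + u * H, 1 - F]

lemma isStarProjection_bottMatrix {R : Type*} [Ring R] [StarRing R] {u F G H : R}
    (t : IsBottTriple F G H) (hu : u ∈ unitary R) (huF : Commute u F) (huG : Commute u G)
    (huH : Commute u H) (hFG : Commute F G) (hFH : Commute F H) :
    IsStarProjection (bottMatrix u F G H) := by
  have hX : G + H * star u = star (G + u * H) := by
    rw [star_add, star_mul, t.isSelfAdjoint_snd.star_eq, t.isSelfAdjoint_thd.star_eq]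
  rw [bottMatrix, hX]
  exact Matrix.isStarProjection_fin_two t.isSelfAdjoint_fst
    (hFG.add_right (huF.symm.mul_right hFH)).symm
    (t.star_add_mul_self hu huG) (t.add_mul_mul_star_self hu huH)

section ContinuousFunctionalCalculus

variable {R A : Type*} {p : A → Prop} [CommRing R] [StarRing R] [MetricSpace R]
  [IsTopologicalRing R] [ContinuousStar R] [TopologicalSpace A] [Ring A] [StarRing A]
  [Algebra R A] [ContinuousFunctionalCalculus R A p]

lemma isSelfAdjoint_cfc_of_forall {f : R → R} {a : A}
    (hf : ∀ z ∈ spectrum R a, IsSelfAdjoint (f z)) : IsSelfAdjoint (cfc f a) := by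
  rw [IsSelfAdjoint, ← cfc_star]
  exact cfc_congr hf

lemma IsBottTriple.cfc {f g h : R → R} {a : A} (hf : ContinuousOn f (spectrum R a))
    (hg : ContinuousOn g (spectrum R a)) (hh : ContinuousOn h (spectrum R a))
    (hfgh : ∀ z ∈ spectrum R a, IsBottTriple (f z) (g z) (h z)) :
    IsBottTriple (cfc f a) (cfc g a) (cfc h a) where
  isSelfAdjoint_fst := isSelfAdjoint_cfc_of_forall fun z hz ↦ (hfgh z hz).isSelfAdjoint_fst
  isSelfAdjoint_snd := isSelfAdjoint_cfc_of_forall fun z hz ↦ (hfgh z hz).isSelfAdjoint_snd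
  isSelfAdjoint_thd := isSelfAdjoint_cfc_of_forall fun z hz ↦ (hfgh z hz).isSelfAdjoint_thd
  mul_eq_zero := by
    rw [← cfc_mul g h a, ← cfc_zero R a]
    exact cfc_congr fun z hz ↦ (hfgh z hz).mul_eq_zero
  mul_self_add_mul_self := by
    rw [← cfc_mul g g a, ← cfc_mul h h a, ← cfc_mul f f a,
      ← cfc_add a (fun z ↦ g z * g z) (fun z ↦ h z * h z) (hg.mul hg) (hh.mul hh),
      ← cfc_sub f (fun z ↦ f z * f z) a hf (hf.mul hf)]
    exact cfc_congr fun z hz ↦ (hfgh z hz).mul_self_add_mul_self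

end ContinuousFunctionalCalculus

lemma exists_mem_Ico_exp_eq {z : ℂ} (hz : z ∈ Metric.sphere (0 : ℂ) 1) :
    ∃ t ∈ Set.Ico (0 : ℝ) 1, exp (2 * Real.pi * t * I) = z := by
  have hπ : 0 < 2 * Real.pi := Real.two_pi_pos
  obtain ⟨hθ₀, hθ₁⟩ := toIcoMod_mem_Ico' hπ z.arg
  refine ⟨toIcoMod hπ 0 z.arg / (2 * Real.pi), ⟨by positivity, (div_lt_one hπ).2 hθ₁⟩, ?_⟩
  have hz1 : ‖z‖ = 1 := by simpa using hz
  calc exp (2 * Real.pi * ↑(toIcoMod hπ 0 z.arg / (2 * Real.pi)) * I)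
      = exp (z.arg * I - toIcoDiv hπ 0 z.arg * (2 * Real.pi * I)) := by
        rw [← self_sub_toIcoDiv_zsmul hπ 0 z.arg]
        push_cast [zsmul_eq_mul]
        field_simp
    _ = z := by
        rw [exp_sub, exp_int_mul_two_pi_mul_I, div_one]
        simpa [hz1] using norm_mul_exp_arg_mul_I z

lemma isBottTriple_of_mem_sphere {f g h : ℂ → ℂ}
    (hf1 : ∀ t ∈ Set.Icc (0 : ℝ) (1/2),
      f (Complex.exp (2 * Real.pi * t * Complex.I)) = ((1 - 2 * t : ℝ) : ℂ))
    (hf2 : ∀ t ∈ Set.Ioc (1/2 : ℝ) 1,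
      f (Complex.exp (2 * Real.pi * t * Complex.I)) = ((-1 + 2 * t : ℝ) : ℂ))
    (hg1 : ∀ t ∈ Set.Icc (0 : ℝ) (1/2),
      g (Complex.exp (2 * Real.pi * t * Complex.I)) =
        ((Real.sqrt ((1 - 2 * t) - (1 - 2 * t) ^ 2) : ℝ) : ℂ))
    (hg2 : ∀ t ∈ Set.Ioc (1/2 : ℝ) 1, g (Complex.exp (2 * Real.pi * t * Complex.I)) = 0)
    (hh1 : ∀ t ∈ Set.Icc (0 : ℝ) (1/2), h (Complex.exp (2 * Real.pi * t * Complex.I)) = 0)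
    (hh2 : ∀ t ∈ Set.Ioc (1/2 : ℝ) 1,
      h (Complex.exp (2 * Real.pi * t * Complex.I)) =
        ((Real.sqrt ((-1 + 2 * t) - (-1 + 2 * t) ^ 2) : ℝ) : ℂ))
    {z : ℂ} (hz : z ∈ Metric.sphere (0 : ℂ) 1) : IsBottTriple (f z) (g z) (h z) := by
  obtain ⟨t, ⟨ht₀, ht₁⟩, rfl⟩ := exists_mem_Ico_exp_eq hz
  rcases le_or_gt t (1 / 2) with ht | ht
  · rw [hf1 t ⟨ht₀, ht⟩, hg1 t ⟨ht₀, ht⟩, hh1 t ⟨ht₀, ht⟩]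
    exact isBottTriple_ofReal_sqrt (by linarith) (by linarith)
  · rw [hf2 t ⟨ht, ht₁.le⟩, hg2 t ⟨ht, ht₁.le⟩, hh2 t ⟨ht, ht₁.le⟩]
    exact (isBottTriple_ofReal_sqrt (by linarith) (by linarith)).swap

/-- Let `f, g, h` be the continuous functions on the unit circle given by
`f(e^{2πit}) = 1−2t` on `[0,1/2]` and `−1+2t` on `(1/2,1]`,
`g = (f−f²)^{1/2}` on the upper half and `0` on the lower half,
`h = 0` on the upper half and `(f−f²)^{1/2}` on the lower half.
For commuting unitaries `u, v` in a unital C*-algebra `A`, the Bott–Loring element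
`e(u,v) = [[f(v), g(v)+h(v)u*], [g(v)+u·h(v), 1−f(v)]]` of `M₂(A)` is a projection. -/
theorem bott_loring_element_is_projection
    {A : Type*} [CStarAlgebra A] (u v : A)
    (hu : u ∈ unitary A) (hv : v ∈ unitary A) (huv : u * v = v * u)
    (f g h : ℂ → ℂ)
    (hfc : ContinuousOn f (Metric.sphere (0 : ℂ) 1))
    (hgc : ContinuousOn g (Metric.sphere (0 : ℂ) 1))
    (hhc : ContinuousOn h (Metric.sphere (0 : ℂ) 1))
    (hf1 : ∀ t ∈ Set.Icc (0 : ℝ) (1/2),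
      f (Complex.exp (2 * Real.pi * t * Complex.I)) = ((1 - 2 * t : ℝ) : ℂ))
    (hf2 : ∀ t ∈ Set.Ioc (1/2 : ℝ) 1,
      f (Complex.exp (2 * Real.pi * t * Complex.I)) = ((-1 + 2 * t : ℝ) : ℂ))
    (hg1 : ∀ t ∈ Set.Icc (0 : ℝ) (1/2),
      g (Complex.exp (2 * Real.pi * t * Complex.I)) =
        ((Real.sqrt ((1 - 2 * t) - (1 - 2 * t) ^ 2) : ℝ) : ℂ))
    (hg2 : ∀ t ∈ Set.Ioc (1/2 : ℝ) 1, g (Complex.exp (2 * Real.pi * t * Complex.I)) = 0)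
    (hh1 : ∀ t ∈ Set.Icc (0 : ℝ) (1/2), h (Complex.exp (2 * Real.pi * t * Complex.I)) = 0)
    (hh2 : ∀ t ∈ Set.Ioc (1/2 : ℝ) 1,
      h (Complex.exp (2 * Real.pi * t * Complex.I)) =
        ((Real.sqrt ((-1 + 2 * t) - (-1 + 2 * t) ^ 2) : ℝ) : ℂ)) :
    IsSelfAdjoint
      (!![cfc f v, cfc g v + cfc h v * star u;
          cfc g v + u * cfc h v, 1 - cfc f v] : Matrix (Fin 2) (Fin 2) A) ∧
    (!![cfc f v, cfc g v + cfc h v * star u;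
        cfc g v + u * cfc h v, 1 - cfc f v] : Matrix (Fin 2) (Fin 2) A) *
      !![cfc f v, cfc g v + cfc h v * star u;
         cfc g v + u * cfc h v, 1 - cfc f v] =
      !![cfc f v, cfc g v + cfc h v * star u;
         cfc g v + u * cfc h v, 1 - cfc f v] := by
  have hvn : IsStarNormal v := isStarNormal_of_mem_unitary hv
  have hσ : spectrum ℂ v ⊆ Metric.sphere 0 1 := spectrum.subset_circle_of_unitary hv
  have hvu : Commute v u := huv.symm
  have hu_cfc (k : ℂ → ℂ) : Commute u (cfc k v) := (hvu.cfc (hvn.commute_star_left hvu) k).symm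
  have hbott : IsBottTriple (cfc f v) (cfc g v) (cfc h v) :=
    .cfc (hfc.mono hσ) (hgc.mono hσ) (hhc.mono hσ) fun z hz ↦
      isBottTriple_of_mem_sphere hf1 hf2 hg1 hg2 hh1 hh2 (hσ hz)
  have hproj := isStarProjection_bottMatrix hbott hu (hu_cfc f) (hu_cfc g) (hu_cfc h)
    (cfc_commute_cfc f g v) (cfc_commute_cfc f h v)
  exact ⟨hproj.isSelfAdjoint, hproj.isIdempotentElem⟩
end

section
/- Let (X,d) be a metric space, γ : [0,1] → X a continuous path of finite length L, and f : X → ℂ a function with local Lipschitz constant at most 1 in the following sense: for every ε > 0 and every x ∈ X there exists δ > 0 such that |f(y) − f(z)| ≤ (1+ε)·d(y,z) for all y, z in the ball B(x,δ). Then the total variation of f∘γ over [0,1] is at most L; in particular |f(γ(1)) − f(γ(0))| ≤ L. -/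
/-!
By compactness, `[0,1]` splits into finitely many intervals on each of which `γ` stays in a
ball where `f` is `(1+ε)`-Lipschitz. Additivity of the variation over such a partition gives
`Var(f ∘ γ) ≤ (1+ε) · Length(γ)`, and letting `ε → 0` gives the bound by the length.
-/

open scoped ENNReal NNReal Topology
open Set Filter

/-- Unlike in `LocallyLipschitz`, the Lipschitz constant `K` is the same near every point. -/
def LocallyLipschitzWith {X Y : Type*} [PseudoEMetricSpace X] [PseudoEMetricSpace Y]
    (K : ℝ≥0) (f : X → Y) : Prop :=
  ∀ x, ∃ U ∈ 𝓝 x, LipschitzOnWith K f U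

theorem eVariationOn_Icc_eq_sum {α E : Type*} [LinearOrder α] [PseudoEMetricSpace E]
    (f : α → E) {t : ℕ → α} (ht : Monotone t) (n : ℕ) :
    eVariationOn f (Icc (t 0) (t n)) =
      ∑ i ∈ Finset.range n, eVariationOn f (Icc (t i) (t (i + 1))) := by
  induction n with
  | zero => simp [eVariationOn.subsingleton]
  | succ n ih =>
    rw [Finset.sum_range_succ, ← ih]
    simpa only [univ_inter] using
      (eVariationOn.Icc_add_Icc f (ht (Nat.zero_le n)) (ht n.le_succ) (mem_univ _)).symm

theorem LocallyLipschitzWith.eVariationOn_comp_le {X Y : Type*} [PseudoEMetricSpace X]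
    [PseudoEMetricSpace Y] {K : ℝ≥0} {f : X → Y} (hf : LocallyLipschitzWith K f) {γ : ℝ → X}
    {a b : ℝ} (hγ : ContinuousOn γ (Icc a b)) :
    eVariationOn (f ∘ γ) (Icc a b) ≤ K * eVariationOn γ (Icc a b) := by
  rcases lt_or_ge b a with hba | hab
  · simp [Icc_eq_empty_of_lt hba]
  choose U hU hfU using hf
  obtain ⟨t, ht0, htmono, ⟨m, htm⟩, htU⟩ :=
    exists_monotone_Icc_subset_open_cover_Icc hab
      (c := fun x => (Icc a b).domRestrict γ ⁻¹' interior (U x))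
      (fun x => isOpen_interior.preimage hγ.domRestrict)
      (fun s _ => mem_iUnion.2 ⟨γ s, mem_interior_iff_mem_nhds.2 (hU _)⟩)
  have hmono : Monotone fun n => (t n : ℝ) := fun _ _ h => htmono h
  have hpiece : ∀ n, eVariationOn (f ∘ γ) (Icc (t n : ℝ) (t (n + 1))) ≤
      K * eVariationOn γ (Icc (t n : ℝ) (t (n + 1))) := by
    intro n
    obtain ⟨x, hx⟩ := htU n
    refine (hfU x).comp_eVariationOn_le fun s hs => interior_subset (hx (a := ⟨s, ?_⟩) hs)
    exact ⟨(t n).2.1.trans hs.1, hs.2.trans (t (n + 1)).2.2⟩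
  have hIcc : Icc a b = Icc (t 0 : ℝ) (t m) := by rw [ht0, htm m le_rfl]
  rw [hIcc, eVariationOn_Icc_eq_sum _ hmono, eVariationOn_Icc_eq_sum _ hmono, Finset.mul_sum]
  exact Finset.sum_le_sum fun n _ => hpiece n

theorem eVariationOn_comp_le_of_forall_one_lt {X Y : Type*} [PseudoEMetricSpace X]
    [PseudoEMetricSpace Y] {f : X → Y} (hf : ∀ K : ℝ≥0, 1 < K → LocallyLipschitzWith K f)
    {γ : ℝ → X} {a b : ℝ} (hγ : ContinuousOn γ (Icc a b)) :
    eVariationOn (f ∘ γ) (Icc a b) ≤ eVariationOn γ (Icc a b) := by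
  have hlim : Tendsto (fun K : ℝ≥0 => (K : ℝ≥0∞) * eVariationOn γ (Icc a b)) (𝓝[>] 1)
      (𝓝 (eVariationOn γ (Icc a b))) := by
    simpa using ENNReal.Tendsto.mul_const
      ((ENNReal.continuous_coe.tendsto 1).mono_left nhdsWithin_le_nhds) (Or.inl one_ne_zero)
  exact ge_of_tendsto hlim <|
    eventually_nhdsWithin_of_forall fun K hK => (hf K hK).eVariationOn_comp_le hγ

/-- If `γ : [0,1] → X` is a continuous path of finite length `L` and
`f : X → ℂ` has local Lipschitz constant at most `1` (for every `ε > 0` and `x ∈ X` there is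
`δ > 0` with `|f(y) − f(z)| ≤ (1+ε)·d(y,z)` for `y, z ∈ B(x,δ)`), then the total variation of
`f ∘ γ` over `[0,1]` is at most `L`; in particular `|f(γ(1)) − f(γ(0))| ≤ L`. -/
theorem variation_le_length_of_locally_one_lipschitz
    {X : Type*} [MetricSpace X] (γ : ℝ → X) (L : ℝ) (hL : 0 ≤ L)
    (hγ : ContinuousOn γ (Set.Icc 0 1))
    (hlen : eVariationOn γ (Set.Icc 0 1) ≤ ENNReal.ofReal L)
    (f : X → ℂ)
    (hf : ∀ ε : ℝ, 0 < ε → ∀ x : X, ∃ δ : ℝ, 0 < δ ∧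
      ∀ y ∈ Metric.ball x δ, ∀ z ∈ Metric.ball x δ,
        dist (f y) (f z) ≤ (1 + ε) * dist y z) :
    eVariationOn (fun t => f (γ t)) (Set.Icc 0 1) ≤ ENNReal.ofReal L ∧
    dist (f (γ 1)) (f (γ 0)) ≤ L := by
  have hf' : ∀ K : ℝ≥0, 1 < K → LocallyLipschitzWith K f := by
    intro K hK x
    obtain ⟨δ, hδ, hlip⟩ := hf (K - 1) (by simpa using hK) x
    refine ⟨Metric.ball x δ, Metric.ball_mem_nhds x hδ,
      LipschitzOnWith.of_dist_le_mul fun y hy z hz => ?_⟩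
    simpa using hlip y hy z hz
  have hvar : eVariationOn (fun t => f (γ t)) (Set.Icc 0 1) ≤ ENNReal.ofReal L :=
    (eVariationOn_comp_le_of_forall_one_lt hf' hγ).trans hlen
  have hends : edist (f (γ 1)) (f (γ 0)) ≤ eVariationOn (fun t => f (γ t)) (Set.Icc 0 1) :=
    eVariationOn.edist_le _ (right_mem_Icc.2 zero_le_one) (left_mem_Icc.2 zero_le_one)
  exact ⟨hvar, (edist_le_ofReal hL).1 (hends.trans hvar)⟩
end

section
/- Let (X,d) be a path connected compact metric space with base point ξ, and define the product metric on X × S¹ by dist((x,t),(y,s)) = √(d(x,y)² + |t−s|²), where S¹ ⊂ ℂ carries the metric from ℂ. Then L(X×S¹, (ξ,1)) ≤ √(L(X,ξ)² + π²), where L(Y,η) denotes the supremum over points y ∈ Y of the infimum of lengths of continuous paths in Y from η to y. -/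
/-!
Join `(ξ, 1)` to `(y, w)` by running simultaneously a nearly shortest path `γ` from `ξ` to `y`,
of length `V`, and the arc of the circle from `1` to `w`, of length `|arg w| ≤ π`. If the arc is
parametrised by the normalised arclength of `γ`, the two coordinates move at proportional speeds,
so the `ℓ²` distance between any two points of the joint path is at most `√(V² + π²)` times the
increment of the parameter, and the joint path has length at most `√(V² + π²)`.
-/

open scoped ENNReal

/-- The infimum of the lengths (total variations) of continuous paths in `X` from `x` to `y`. -/
noncomputable def pathEDist {X : Type*} [PseudoEMetricSpace X] (x y : X) : ℝ≥0∞ :=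
  ⨅ γ ∈ {γ : ℝ → X | ContinuousOn γ (Set.Icc 0 1) ∧ γ 0 = x ∧ γ 1 = y},
    eVariationOn γ (Set.Icc 0 1)

open Set
open scoped NNReal

section Variation

variable {α : Type*} [LinearOrder α] {E : Type*} [PseudoMetricSpace E] {f : α → E} {s : Set α}

theorem LocallyBoundedVariationOn.continuousOn_variationOnFromTo [TopologicalSpace α]
    [OrderTopology α] (hbv : LocallyBoundedVariationOn f s) (hf : ContinuousOn f s) {a : α}
    (ha : a ∈ s) : ContinuousOn (variationOnFromTo f s a) s := by
  intro b hb
  have hleft := variationOnFromTo.tendsto_left ha hb hbv ((hf b hb).mono inter_subset_left)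
  have hright := variationOnFromTo.tendsto_right ha hb hbv ((hf b hb).mono inter_subset_left)
  rw [dist_self, sub_zero] at hleft
  rw [dist_self, add_zero] at hright
  rw [← continuousWithinAt_sdiff_self, sdiff_eq, ← Iio_union_Ioi, inter_union_distrib_left]
  exact ContinuousWithinAt.union hleft hright

theorem dist_le_variationOnFromTo_sub (hbv : LocallyBoundedVariationOn f s) {a b c : α}
    (ha : a ∈ s) (hb : b ∈ s) (hc : c ∈ s) (hbc : b ≤ c) :
    dist (f b) (f c) ≤ variationOnFromTo f s a c - variationOnFromTo f s a b := by
  rw [variationOnFromTo.sub_right hbv ha hc hb, variationOnFromTo.eq_of_le f s hbc, dist_edist]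
  exact ENNReal.toReal_mono (hbv b c hb hc)
    (eVariationOn.edist_le f ⟨hb, le_rfl, hbc⟩ ⟨hc, hbc, le_rfl⟩)

theorem eVariationOn_le_ofReal_mul_of_dist_le {φ : α → ℝ} {K : ℝ} (hK : 0 ≤ K)
    (h : ∀ a ∈ s, ∀ b ∈ s, a ≤ b → dist (f a) (f b) ≤ K * (φ b - φ a)) :
    eVariationOn f s ≤ ENNReal.ofReal K * eVariationOn φ s := by
  refine iSup_le fun ⟨n, u, hu, us⟩ => ?_
  calc ∑ i ∈ Finset.range n, edist (f (u (i + 1))) (f (u i))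
      ≤ ∑ i ∈ Finset.range n, ENNReal.ofReal K * edist (φ (u (i + 1))) (φ (u i)) := by
        refine Finset.sum_le_sum fun i _ => ?_
        rw [edist_comm, edist_dist, edist_dist, Real.dist_eq, ← ENNReal.ofReal_mul hK]
        refine ENNReal.ofReal_le_ofReal ((h _ (us i) _ (us (i + 1)) (hu i.le_succ)).trans ?_)
        exact mul_le_mul_of_nonneg_left (le_abs_self _) hK
    _ ≤ ENNReal.ofReal K * eVariationOn φ s := by
        rw [← Finset.mul_sum]
        gcongr
        exact eVariationOn.sum_le hu us

end Variation

theorem WithLp.prod_dist_le_sqrt {X Y : Type*} [PseudoMetricSpace X] [PseudoMetricSpace Y]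
    {x y : WithLp 2 (X × Y)} {a b : ℝ} (ha : dist x.fst y.fst ≤ a) (hb : dist x.snd y.snd ≤ b) :
    dist x y ≤ √(a ^ 2 + b ^ 2) := by
  rw [WithLp.prod_dist_eq_add (by norm_num), ENNReal.toReal_ofNat, Real.rpow_two, Real.rpow_two,
    ← Real.sqrt_eq_rpow]
  gcongr

theorem Real.sqrt_add_sq_add_sq_le {a b c : ℝ} (hc : 0 ≤ c) :
    √((a + c) ^ 2 + b ^ 2) ≤ √(a ^ 2 + b ^ 2) + c := by
  have ha : a ≤ √(a ^ 2 + b ^ 2) := Real.le_sqrt_of_sq_le (by nlinarith)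
  rw [Real.sqrt_le_left (by positivity)]
  nlinarith [Real.sq_sqrt (by positivity : 0 ≤ a ^ 2 + b ^ 2)]

section PathEDist

variable {X : Type*}

theorem pathEDist_le_eVariationOn [PseudoEMetricSpace X] {γ : ℝ → X}
    (hγ : ContinuousOn γ (Icc 0 1)) : pathEDist (γ 0) (γ 1) ≤ eVariationOn γ (Icc 0 1) :=
  iInf₂_le γ ⟨hγ, rfl, rfl⟩

theorem exists_eVariationOn_lt_of_pathEDist_lt [PseudoEMetricSpace X] {x y : X} {r : ℝ≥0∞}
    (h : pathEDist x y < r) : ∃ γ : ℝ → X, ContinuousOn γ (Icc 0 1) ∧ γ 0 = x ∧ γ 1 = y ∧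
      eVariationOn γ (Icc 0 1) < r := by
  simpa [pathEDist, iInf_lt_iff, and_assoc] using h

variable {Y : Type*} [PseudoMetricSpace X] [PseudoMetricSpace Y]

theorem pathEDist_toLp_prod_le {γ : ℝ → X} (hγ : ContinuousOn γ (Icc 0 1))
    (hbv : BoundedVariationOn γ (Icc 0 1)) {σ : ℝ → Y} {K : ℝ≥0} (hσ : LipschitzWith K σ)
    {ε : ℝ} (hε : 0 < ε) :
    pathEDist (WithLp.toLp 2 (γ 0, σ 0)) (WithLp.toLp 2 (γ 1, σ 1)) ≤
      ENNReal.ofReal √(((eVariationOn γ (Icc 0 1)).toReal + ε) ^ 2 + K ^ 2) := by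
  set I := Icc (0 : ℝ) 1
  have h0I : (0 : ℝ) ∈ I := ⟨le_rfl, zero_le_one⟩
  have h1I : (1 : ℝ) ∈ I := ⟨zero_le_one, le_rfl⟩
  have hlbv : LocallyBoundedVariationOn γ I := hbv.locallyBoundedVariationOn
  set h := variationOnFromTo γ I 0
  set W := (eVariationOn γ I).toReal + ε
  have hW : 0 < W := by positivity
  -- Normalised arclength of `γ`; the term `ε * t` keeps `W` positive when `γ` is constant.
  set φ : ℝ → ℝ := fun t ↦ (h t + ε * t) / W
  have hφ0 : φ 0 = 0 := by simp [φ, h, variationOnFromTo.self]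
  have hφ1 : φ 1 = 1 := by
    have hII : I ∩ Icc 0 1 = I := inter_self I
    simp only [φ, h, variationOnFromTo.eq_of_le γ I zero_le_one, hII, mul_one]
    exact div_self hW.ne'
  have hφcont : ContinuousOn φ I :=
    ((hlbv.continuousOn_variationOnFromTo hγ h0I).add
      (continuousOn_const.mul continuousOn_id)).div_const W
  have hγφ : ∀ a ∈ I, ∀ b ∈ I, a ≤ b → dist (γ a) (γ b) ≤ W * (φ b - φ a) := by
    intro a ha b hb hab
    calc dist (γ a) (γ b) ≤ h b - h a := dist_le_variationOnFromTo_sub hlbv h0I ha hb hab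
      _ ≤ h b - h a + ε * (b - a) := by nlinarith
      _ = W * (φ b - φ a) := by simp only [φ]; field_simp; ring
  have hφmono : MonotoneOn φ I := fun a ha b hb hab ↦
    sub_nonneg.mp <| (mul_nonneg_iff_of_pos_left hW).mp <| dist_nonneg.trans (hγφ a ha b hb hab)
  have hσφ : ∀ a ∈ I, ∀ b ∈ I, a ≤ b → dist (σ (φ a)) (σ (φ b)) ≤ K * (φ b - φ a) := by
    intro a ha b hb hab
    rw [← abs_of_nonneg (sub_nonneg.mpr (hφmono ha hb hab)), ← Real.dist_eq, dist_comm]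
    exact hσ.dist_le_mul _ _
  set δ : ℝ → WithLp 2 (X × Y) := fun t ↦ WithLp.toLp 2 (γ t, σ (φ t))
  have hδ : ContinuousOn δ I :=
    (WithLp.prod_continuous_toLp 2 X Y).comp_continuousOn
      (hγ.prodMk (hσ.continuous.comp_continuousOn hφcont))
  have hδφ : ∀ a ∈ I, ∀ b ∈ I, a ≤ b → dist (δ a) (δ b) ≤ √(W ^ 2 + K ^ 2) * (φ b - φ a) := by
    intro a ha b hb hab
    have hd : 0 ≤ φ b - φ a := sub_nonneg.mpr (hφmono ha hb hab)
    refine (WithLp.prod_dist_le_sqrt (hγφ a ha b hb hab) (hσφ a ha b hb hab)).trans_eq ?_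
    rw [show (W * (φ b - φ a)) ^ 2 + (K * (φ b - φ a)) ^ 2 = (W ^ 2 + K ^ 2) * (φ b - φ a) ^ 2 by
      ring, Real.sqrt_mul (by positivity), Real.sqrt_sq hd]
  calc pathEDist (WithLp.toLp 2 (γ 0, σ 0)) (WithLp.toLp 2 (γ 1, σ 1))
        = pathEDist (δ 0) (δ 1) := by simp only [δ, hφ0, hφ1]
    _ ≤ eVariationOn δ I := pathEDist_le_eVariationOn hδ
    _ ≤ ENNReal.ofReal √(W ^ 2 + K ^ 2) * eVariationOn φ I :=
        eVariationOn_le_ofReal_mul_of_dist_le (by positivity) hδφ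
    _ = ENNReal.ofReal √(W ^ 2 + K ^ 2) := by
        rw [← inter_self I, hφmono.eVariationOn_eq h0I h1I, hφ0, hφ1, sub_zero, ENNReal.ofReal_one,
          mul_one]

end PathEDist

theorem exists_lipschitzWith_pi_path_sphere (w : Metric.sphere (0 : ℂ) 1) :
    ∃ σ : ℝ → Metric.sphere (0 : ℂ) 1,
      LipschitzWith NNReal.pi σ ∧ σ 0 = ⟨1, by simp⟩ ∧ σ 1 = w := by
  refine ⟨fun u ↦ ⟨circleMap 0 1 (Complex.arg w * u), circleMap_mem_sphere 0 zero_le_one _⟩,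
    ?_, ?_, ?_⟩
  · refine LipschitzWith.subtype_mk ?_ _
    refine ((lipschitzWith_circleMap 0 1).comp (lipschitzWith_smul (Complex.arg w))).weaken ?_
    rw [← NNReal.coe_le_coe, NNReal.coe_mul, Real.coe_nnabs, abs_one, one_mul, coe_nnnorm,
      Real.norm_eq_abs, NNReal.coe_real_pi]
    exact Complex.abs_arg_le_pi w
  · ext
    simp [circleMap]
  · ext
    simpa [circleMap, mem_sphere_zero_iff_norm.mp w.2] using Complex.norm_mul_exp_arg_mul_I (w : ℂ)

theorem ENNReal.sq_add_ofReal_sq_rpow_half {x : ℝ≥0∞} (hx : x ≠ ⊤) {r : ℝ} (hr : 0 ≤ r) :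
    (x ^ 2 + ENNReal.ofReal r ^ 2) ^ (1 / 2 : ℝ) = ENNReal.ofReal √(x.toReal ^ 2 + r ^ 2) := by
  rw [← ENNReal.ofReal_toReal hx, ← ENNReal.ofReal_pow ENNReal.toReal_nonneg,
    ← ENNReal.ofReal_pow hr, ← ENNReal.ofReal_add (by positivity) (by positivity),
    ENNReal.ofReal_rpow_of_nonneg (by positivity) (by norm_num), Real.sqrt_eq_rpow,
    ENNReal.toReal_ofReal ENNReal.toReal_nonneg]

theorem pathEDist_toLp_prod_sphere_le {X : Type*} [PseudoMetricSpace X] {ξ y : X}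
    (hy : pathEDist ξ y ≠ ⊤) (w : Metric.sphere (0 : ℂ) 1) {ε : ℝ} (hε : 0 < ε) :
    pathEDist (WithLp.toLp 2 (ξ, (⟨1, by simp⟩ : Metric.sphere (0 : ℂ) 1))) (WithLp.toLp 2 (y, w))
      ≤ ENNReal.ofReal √(((pathEDist ξ y).toReal + ε) ^ 2 + Real.pi ^ 2) := by
  have hε2 : 0 < ε / 2 := half_pos hε
  obtain ⟨γ, hγ, rfl, rfl, hγy⟩ := exists_eVariationOn_lt_of_pathEDist_lt <|
    ENNReal.lt_add_right hy (ENNReal.ofReal_pos.mpr hε2).ne'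
  obtain ⟨σ, hσ, hσ0, hσ1⟩ := exists_lipschitzWith_pi_path_sphere w
  have hV : (eVariationOn γ (Icc 0 1)).toReal ≤ (pathEDist (γ 0) (γ 1)).toReal + ε / 2 := by
    have := ENNReal.toReal_mono (by finiteness) hγy.le
    rwa [ENNReal.toReal_add hy ENNReal.ofReal_ne_top, ENNReal.toReal_ofReal hε2.le] at this
  have hbound := pathEDist_toLp_prod_le hγ (hγy.trans_le le_top).ne hσ hε2
  rw [hσ0, hσ1, NNReal.coe_real_pi] at hbound
  refine hbound.trans (ENNReal.ofReal_le_ofReal (Real.sqrt_le_sqrt ?_))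
  gcongr ?_ ^ 2 + _
  linarith

/-- For a path connected compact metric space `X` with base point `ξ`, and
`X × S¹` equipped with the metric `dist((x,t),(y,s)) = √(d(x,y)² + |t−s|²)` (the `ℓ²`-product
metric, realized as `WithLp 2 (X × S¹)`), one has
`L(X × S¹, (ξ,1)) ≤ √(L(X,ξ)² + π²)`. -/
theorem universal_homotopy_length_prod_circle
    {X : Type*} [MetricSpace X] (ξ : X) :
    (⨆ z : WithLp 2 (X × ↥(Metric.sphere (0 : ℂ) 1)),
        pathEDist
          ((WithLp.equiv 2 (X × ↥(Metric.sphere (0 : ℂ) 1))).symm (ξ, ⟨1, by simp⟩)) z)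
      ≤ ((⨆ y : X, pathEDist ξ y) ^ 2 + ENNReal.ofReal Real.pi ^ 2) ^ (1/2 : ℝ) := by
  set L := ⨆ y : X, pathEDist ξ y
  rcases eq_or_ne L ⊤ with hL | hL
  · simp [hL]
  rw [ENNReal.sq_add_ofReal_sq_rpow_half hL Real.pi_pos.le]
  refine ENNReal.le_of_forall_pos_le_add fun ε hε _ ↦ iSup_le fun z ↦ ?_
  obtain ⟨y, w⟩ := z
  have hyL : pathEDist ξ y ≤ L := le_iSup (pathEDist ξ) y
  calc _ ≤ ENNReal.ofReal √(((pathEDist ξ y).toReal + ε) ^ 2 + Real.pi ^ 2) :=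
        pathEDist_toLp_prod_sphere_le (ne_top_of_le_ne_top hL hyL) w (by positivity)
    _ ≤ ENNReal.ofReal (√(L.toReal ^ 2 + Real.pi ^ 2) + ε) := by
      gcongr
      calc _ ≤ √((L.toReal + ε) ^ 2 + Real.pi ^ 2) := by gcongr
        _ ≤ _ := Real.sqrt_add_sq_add_sq_le ε.coe_nonneg
    _ = ENNReal.ofReal √(L.toReal ^ 2 + Real.pi ^ 2) + ε := by
      rw [ENNReal.ofReal_add (by positivity) ε.coe_nonneg, ENNReal.ofReal_coe_nnreal]
end

section
/- Let X ⊂ ℝ² be the closure of the set {(t, t·sin(1/t)) : t ∈ (0,1]}, i.e. X = {(t, t·sin(1/t)) : t ∈ (0,1]} ∪ {(0,0)}. Then X is a path connected compact metric space, but every continuous path γ : [0,1] → X with γ(0) = (0,0) and γ(1) = (1, sin 1) has infinite length. Consequently L(X, ξ) = ∞ for every ξ ∈ X. -/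
/-!
Every point of `X` lies above its first coordinate, so a path `γ` in `X` is `g ∘ x` with
`g t = (t, t sin (1/t))` and `x` the first coordinate of `γ`. By the intermediate value theorem
`x` sweeps out the interval between its end values along a monotone choice of first hitting
times, hence `γ` is at least as long as `g` over that interval. If one end of `γ` is the origin,
the interval is `[0, c]` with `c > 0`, and there `g` has infinite length: its second coordinate
takes the values `± 1 / ((k + 1/2) π)` alternately, and the harmonic series diverges.
-/

open scoped ENNReal

/-- The point `(a, b)` of the Euclidean plane. -/
noncomputable def planePt (a b : ℝ) : EuclideanSpace ℝ (Fin 2) :=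
  (EuclideanSpace.equiv (Fin 2) ℝ).symm ![a, b]

/-- The closure of `{(t, t·sin(1/t)) : t ∈ (0,1]}` in the Euclidean plane, i.e. the graph
together with the point `(0,0)`. -/
noncomputable def sineCurve : Set (EuclideanSpace ℝ (Fin 2)) :=
  {p | ∃ t ∈ Set.Ioc (0 : ℝ) 1, p = planePt t (t * Real.sin (1 / t))} ∪ {planePt 0 0}

open Set Real

lemma exists_monotoneOn_rightInvOn_of_continuousOn {x : ℝ → ℝ} {a b : ℝ} (hab : a ≤ b)
    (hx : ContinuousOn x (Icc a b)) :
    ∃ φ : ℝ → ℝ, MonotoneOn φ (Icc (x a) (x b)) ∧ MapsTo φ (Icc (x a) (x b)) (Icc a b) ∧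
      ∀ u ∈ Icc (x a) (x b), x (φ u) = u := by
  -- `φ u` is the first time at which `x` reaches the level `u`.
  set S : ℝ → Set ℝ := fun u => Icc a b ∩ x ⁻¹' Ici u
  have hS_bdd : ∀ u, BddBelow (S u) := fun _ => ⟨a, fun _ hs => hs.1.1⟩
  have hS : ∀ u ∈ Icc (x a) (x b), sInf (S u) ∈ S u := fun u hu =>
    (hx.preimage_isClosed_of_isClosed isClosed_Icc isClosed_Ici).csInf_mem
      ⟨b, ⟨hab, le_rfl⟩, hu.2⟩ (hS_bdd u)
  refine ⟨fun u => sInf (S u), fun u _ v hv huv => ?_, fun u hu => (hS u hu).1, fun u hu => ?_⟩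
  · exact csInf_le_csInf (hS_bdd u) ⟨b, ⟨hab, le_rfl⟩, hv.2⟩ fun s hs => ⟨hs.1, huv.trans hs.2⟩
  · obtain ⟨⟨haφ, hφb⟩, hφu⟩ := hS u hu
    obtain ⟨s, hs, hxs⟩ :=
      intermediate_value_Icc haφ (hx.mono (Icc_subset_Icc_right hφb)) ⟨hu.1, hφu⟩
    have hφs : sInf (S u) ≤ s := csInf_le (hS_bdd u) ⟨⟨hs.1, hs.2.trans hφb⟩, hxs.ge⟩
    rwa [le_antisymm hs.2 hφs] at hxs

lemma eVariationOn_Icc_le_comp {E : Type*} [PseudoEMetricSpace E] (g : ℝ → E) {x : ℝ → ℝ}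
    {a b : ℝ} (hab : a ≤ b) (hx : ContinuousOn x (Icc a b)) :
    eVariationOn g (Icc (x a) (x b)) ≤ eVariationOn (g ∘ x) (Icc a b) := by
  obtain ⟨φ, hφ, hmaps, hxφ⟩ := exists_monotoneOn_rightInvOn_of_continuousOn hab hx
  calc eVariationOn g (Icc (x a) (x b)) = eVariationOn ((g ∘ x) ∘ φ) (Icc (x a) (x b)) :=
        eVariationOn.eq_of_eqOn fun u hu => by simp [hxφ u hu]
    _ ≤ eVariationOn (g ∘ x) (Icc a b) := eVariationOn.comp_le_of_monotoneOn _ φ hφ hmaps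

lemma eVariationOn_uIcc_le_comp {E : Type*} [PseudoEMetricSpace E] (g : ℝ → E) {x : ℝ → ℝ}
    {a b : ℝ} (hab : a ≤ b) (hx : ContinuousOn x (Icc a b)) :
    eVariationOn g (uIcc (x a) (x b)) ≤ eVariationOn (g ∘ x) (Icc a b) := by
  rcases le_total (x a) (x b) with h | h
  · rw [uIcc_of_le h]
    exact eVariationOn_Icc_le_comp g hab hx
  · have hneg := eVariationOn_Icc_le_comp (g ∘ Neg.neg) hab hx.neg
    rw [eVariationOn.comp_eq_of_antitoneOn g _ fun _ _ _ _ h => neg_le_neg h, image_neg_Icc]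
      at hneg
    rw [uIcc_of_ge h]
    simpa only [Pi.neg_apply, neg_neg, Function.comp_def] using hneg

lemma eVariationOn_eq_top_of_not_summable {α E : Type*} [LinearOrder α] [PseudoMetricSpace E]
    {f : α → E} {s : Set α} {u : ℕ → α} (hu : Monotone u) (hus : ∀ i, u i ∈ s)
    (h : ¬ Summable fun i => dist (f (u (i + 1))) (f (u i))) : eVariationOn f s = ⊤ := by
  by_contra hne
  refine h (summable_of_sum_range_le (c := (eVariationOn f s).toReal) (fun _ => dist_nonneg)
    fun n => ?_)
  rw [← ENNReal.ofReal_le_iff_le_toReal hne, ENNReal.ofReal_sum_of_nonneg fun _ _ => dist_nonneg]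
  simpa only [← edist_dist] using eVariationOn.sum_le hu hus

lemma not_summable_inv_nat_mul_pi_add_pi_div_two :
    ¬ Summable fun n : ℕ => ((n : ℝ) * π + π / 2)⁻¹ := by
  intro h
  refine not_summable_natCast_inv ((summable_nat_add_iff 1).1 ?_)
  refine (h.mul_left π).of_nonneg_of_le (fun n => by positivity) fun n => ?_
  rw [← div_eq_mul_inv, le_div_iff₀ (by positivity), Nat.cast_add_one]
  field_simp
  nlinarith [pi_pos]

lemma continuous_mul_sin_inv : Continuous fun t : ℝ => t * sin (1 / t) := by
  refine continuous_iff_continuousAt.2 fun t => ?_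
  rcases eq_or_ne t 0 with rfl | ht
  · show Filter.Tendsto _ _ (nhds (0 * sin (1 / 0)))
    rw [zero_mul]
    refine squeeze_zero_norm (fun s => ?_) tendsto_norm_zero
    rw [norm_mul]
    exact mul_le_of_le_one_right (norm_nonneg s) (abs_sin_le_one _)
  · exact continuousAt_id.mul
      (continuous_sin.continuousAt.comp (continuousAt_const.div continuousAt_id ht))

lemma eVariationOn_mul_sin_inv_eq_top {c : ℝ} (hc : 0 < c) :
    eVariationOn (fun t : ℝ => t * sin (1 / t)) (Icc 0 c) = ⊤ := by
  set K := ⌈c⁻¹⌉₊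
  -- In the variable `y = 1 / t` the function is `sin y / y`, which alternates in sign with
  -- amplitude `1 / y` at the increasing points `y i = (i + K) π + π / 2 ≥ 1 / c`.
  set y : ℕ → ℝ := fun i => ((i + K : ℕ) : ℝ) * π + π / 2
  have hy_pos : ∀ i, 0 < y i := fun i => by positivity
  have hy_mono : Monotone y := fun i j hij => by
    simp only [y]; gcongr
  have hy_ge : ∀ i, c⁻¹ ≤ y i := fun i =>
    calc c⁻¹ ≤ K := Nat.le_ceil _
      _ ≤ ((i + K : ℕ) : ℝ) * π := by
        push_cast; nlinarith [pi_gt_three, (i.cast_nonneg : (0 : ℝ) ≤ i)]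
      _ ≤ y i := by simp only [y]; linarith [pi_pos]
  have hvalue : ∀ i, (y i)⁻¹ * sin (1 / (y i)⁻¹) = (-1) ^ (i + K) * (y i)⁻¹ := fun i => by
    rw [one_div, inv_inv, sin_add_pi_div_two, cos_nat_mul_pi, mul_comm]
  have hdist : ∀ i, (y i)⁻¹ ≤ dist ((y (i + 1))⁻¹ * sin (1 / (y (i + 1))⁻¹))
      ((y i)⁻¹ * sin (1 / (y i)⁻¹)) := fun i => by
    rw [hvalue, hvalue, Real.dist_eq, show i + 1 + K = i + K + 1 by omega, pow_succ]
    rcases neg_one_pow_eq_or ℝ (i + K) with h | h <;> rw [h, le_abs] <;> [right; left] <;>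
      linarith [inv_pos.2 (hy_pos (i + 1))]
  refine top_unique ?_
  calc ⊤ = eVariationOn ((fun t : ℝ => t * sin (1 / t)) ∘ Inv.inv) (Ici c⁻¹) := by
        refine (eVariationOn_eq_top_of_not_summable hy_mono hy_ge fun h => ?_).symm
        refine not_summable_inv_nat_mul_pi_add_pi_div_two ((summable_nat_add_iff K).1 ?_)
        exact h.of_nonneg_of_le (fun i => (inv_pos.2 (hy_pos i)).le) hdist
    _ ≤ eVariationOn (fun t : ℝ => t * sin (1 / t)) (Icc 0 c) := by
        refine eVariationOn.comp_le_of_antitoneOn _ _ (fun a ha b _ hab => ?_) fun t ht => ?_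
        · exact inv_anti₀ ((inv_pos.2 hc).trans_le ha) hab
        · exact ⟨(inv_pos.2 ((inv_pos.2 hc).trans_le ht)).le, inv_le_of_inv_le₀ hc ht⟩

@[simp] lemma planePt_apply_zero (a b : ℝ) : planePt a b 0 = a := by simp [planePt]

@[simp] lemma planePt_apply_one (a b : ℝ) : planePt a b 1 = b := by simp [planePt]

lemma continuous_planePt : Continuous fun p : ℝ × ℝ => planePt p.1 p.2 := by
  refine (EuclideanSpace.equiv (Fin 2) ℝ).symm.continuous.comp (continuous_pi fun i => ?_)
  fin_cases i
  · simpa using continuous_fst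
  · simpa using continuous_snd

noncomputable def sineCurvePt (t : ℝ) : EuclideanSpace ℝ (Fin 2) := planePt t (t * sin (1 / t))

lemma continuous_sineCurvePt : Continuous sineCurvePt :=
  continuous_planePt.comp (continuous_id.prodMk continuous_mul_sin_inv)

@[simp] lemma sineCurvePt_zero : sineCurvePt 0 = planePt 0 0 := by simp [sineCurvePt]

@[simp] lemma sineCurvePt_apply_zero (t : ℝ) : sineCurvePt t 0 = t := planePt_apply_zero _ _

lemma sineCurve_eq_image : sineCurve = sineCurvePt '' Icc 0 1 := by
  ext p
  constructor
  · rintro (⟨t, ht, rfl⟩ | rfl)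
    exacts [⟨t, Ioc_subset_Icc_self ht, rfl⟩, ⟨0, left_mem_Icc.2 zero_le_one, sineCurvePt_zero⟩]
  · rintro ⟨t, ht, rfl⟩
    rcases ht.1.eq_or_lt with rfl | htpos
    exacts [Or.inr sineCurvePt_zero, Or.inl ⟨t, ⟨htpos, ht.2⟩, rfl⟩]

lemma sineCurvePt_eq_of_mem_sineCurve {p : EuclideanSpace ℝ (Fin 2)} (hp : p ∈ sineCurve) :
    sineCurvePt (p 0) = p := by
  rw [sineCurve_eq_image] at hp
  obtain ⟨t, -, rfl⟩ := hp
  rw [sineCurvePt_apply_zero]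

lemma apply_zero_pos_of_mem_sineCurve {p : EuclideanSpace ℝ (Fin 2)} (hp : p ∈ sineCurve)
    (hp0 : p ≠ planePt 0 0) : 0 < p 0 := by
  rw [sineCurve_eq_image] at hp
  obtain ⟨t, ht, rfl⟩ := hp
  rw [sineCurvePt_apply_zero]
  exact ht.1.lt_of_ne fun h => hp0 (h ▸ sineCurvePt_zero)

lemma eVariationOn_sineCurvePt_eq_top {c : ℝ} (hc : 0 < c) :
    eVariationOn sineCurvePt (Icc 0 c) = ⊤ := by
  have hlip : LipschitzWith 1 fun p : EuclideanSpace ℝ (Fin 2) => p 1 :=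
    LipschitzWith.of_edist_le fun p q => PiLp.edist_apply_le p q 1
  refine top_unique ?_
  calc ⊤ = eVariationOn ((fun p : EuclideanSpace ℝ (Fin 2) => p 1) ∘ sineCurvePt) (Icc 0 c) := by
        simpa [sineCurvePt, Function.comp_def] using (eVariationOn_mul_sin_inv_eq_top hc).symm
    _ ≤ 1 * eVariationOn sineCurvePt (Icc 0 c) :=
        hlip.lipschitzOnWith.comp_eVariationOn_le (mapsTo_univ _ _)
    _ = eVariationOn sineCurvePt (Icc 0 c) := one_mul _

lemma eVariationOn_eq_top_of_mapsTo_sineCurve {γ : ℝ → EuclideanSpace ℝ (Fin 2)} {a b : ℝ}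
    (hab : a ≤ b) (hγ : ContinuousOn γ (Icc a b)) (hmem : MapsTo γ (Icc a b) sineCurve)
    (horigin : γ a = planePt 0 0 ∨ γ b = planePt 0 0) (hne : γ a ≠ γ b) :
    eVariationOn γ (Icc a b) = ⊤ := by
  set x := fun s => γ s 0
  have hx : ContinuousOn x (Icc a b) :=
    (EuclideanSpace.proj (0 : Fin 2)).continuous.comp_continuousOn hγ
  have ha := hmem (left_mem_Icc.2 hab)
  have hb := hmem (right_mem_Icc.2 hab)
  obtain ⟨c, hc, hI⟩ : ∃ c, 0 < c ∧ uIcc (x a) (x b) = Icc 0 c := by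
    rcases horigin with h | h
    · have hpos := apply_zero_pos_of_mem_sineCurve hb (h ▸ hne.symm)
      exact ⟨x b, hpos, by simp only [x, h, planePt_apply_zero, uIcc_of_le hpos.le]⟩
    · have hpos := apply_zero_pos_of_mem_sineCurve ha (h ▸ hne)
      exact ⟨x a, hpos, by simp only [x, h, planePt_apply_zero, uIcc_of_ge hpos.le]⟩
  refine top_unique ?_
  calc ⊤ = eVariationOn sineCurvePt (uIcc (x a) (x b)) := by
        rw [hI, eVariationOn_sineCurvePt_eq_top hc]
    _ ≤ eVariationOn (sineCurvePt ∘ x) (Icc a b) := eVariationOn_uIcc_le_comp _ hab hx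
    _ = eVariationOn γ (Icc a b) :=
        eVariationOn.eq_of_eqOn fun s hs => sineCurvePt_eq_of_mem_sineCurve (hmem hs)

lemma pathEDist_sineCurve_eq_top {ξ η : sineCurve}
    (horigin : (ξ : EuclideanSpace ℝ (Fin 2)) = planePt 0 0 ∨ (η : _) = planePt 0 0)
    (hne : ξ ≠ η) : pathEDist ξ η = ⊤ :=
  iInf₂_eq_top.2 fun γ ⟨hγ, h0, h1⟩ =>
    eVariationOn_eq_top_of_mapsTo_sineCurve (γ := fun s => (γ s : EuclideanSpace ℝ (Fin 2)))
      zero_le_one (continuous_subtype_val.comp_continuousOn hγ) (fun s _ => (γ s).2)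
      (by rwa [h0, h1]) (by rw [h0, h1]; exact Subtype.coe_injective.ne hne)

/-- The set `X = {(t, t·sin(1/t)) : t ∈ (0,1]} ∪ {(0,0)}` is a path
connected compact subset of the plane, but every continuous path in `X` from `(0,0)` to
`(1, sin 1)` has infinite length; consequently `L(X, ξ) = ∞` for every `ξ ∈ X`. -/
theorem sine_curve_infinite_length :
    IsCompact sineCurve ∧ IsPathConnected sineCurve ∧
    (∀ γ : ℝ → EuclideanSpace ℝ (Fin 2), ContinuousOn γ (Set.Icc 0 1) →
      (∀ t ∈ Set.Icc (0 : ℝ) 1, γ t ∈ sineCurve) →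
      γ 0 = planePt 0 0 → γ 1 = planePt 1 (Real.sin 1) →
      eVariationOn γ (Set.Icc 0 1) = ⊤) ∧
    ∀ ξ : ↥sineCurve, (⨆ y : ↥sineCurve, pathEDist ξ y) = ⊤ := by
  have hend : planePt 0 0 ≠ planePt 1 (sin 1) := fun h => by
    simpa using congrArg (· 0) h
  refine ⟨sineCurve_eq_image ▸ isCompact_Icc.image continuous_sineCurvePt,
    sineCurve_eq_image ▸ ((convex_Icc 0 1).isPathConnected ⟨0, left_mem_Icc.2 zero_le_one⟩).image
      continuous_sineCurvePt,
    fun γ hγ hmem h0 h1 =>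
      eVariationOn_eq_top_of_mapsTo_sineCurve zero_le_one hγ hmem (.inl h0) (h0 ▸ h1 ▸ hend),
    fun ξ => ?_⟩
  let origin : sineCurve := ⟨planePt 0 0, Or.inr rfl⟩
  let endpt : sineCurve := ⟨planePt 1 (1 * sin (1 / 1)), Or.inl ⟨1, ⟨one_pos, le_rfl⟩, rfl⟩⟩
  by_cases hξ : (ξ : EuclideanSpace ℝ (Fin 2)) = planePt 0 0
  · refine top_unique (le_iSup_of_le endpt (pathEDist_sineCurve_eq_top (.inl hξ) ?_).ge)
    exact fun h => hend (by simpa [← hξ, endpt] using congrArg Subtype.val h)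
  · exact top_unique (le_iSup_of_le origin
      (pathEDist_sineCurve_eq_top (.inr rfl) fun h => hξ (congrArg Subtype.val h)).ge)
end
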